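/- In a biunital coFrobenius bialgebra (A, μ, λ, η, ε), the pairing p = (-1)^{|λ|}εμ and copairing c = (-1)^{|λ||μ|+|μ|}λη satisfy the snake relations (1⊗p)(c⊗1) = (-1)^{|λ|+|μ|}(p⊗1)(1⊗c) = 1; consequently p and c are perfect. -/

import Mathlib

open TensorProduct LinearMap
open scoped TensorProduct DirectSum

namespace GradedCoFrob

variable {R : Type} [CommRing R] {M : Type} [AddCommGroup M] [Module R M]

/-- The Koszul sign `(-1)^n` for `n : ℤ`. -/
def ksign (n : ℤ) : ℤ := (((-1 : ℤˣ) ^ n : ℤˣ) : ℤ)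

variable (𝒜 : ℤ → Submodule R M) [DirectSum.Decomposition 𝒜]

/-- Build a linear map `M →ₗ N` out of its values on the homogeneous pieces,
bundled linearly in the family of values. -/
noncomputable def fromPiecesHom {N : Type} [AddCommGroup N] [Module R N] :
    (∀ i : ℤ, 𝒜 i →ₗ[R] N) →ₗ[R] (M →ₗ[R] N) :=
  (LinearMap.lcomp R N (DirectSum.decomposeLinearEquiv 𝒜).toLinearMap).comp
    (DFinsupp.lsum R (M := fun i => 𝒜 i) (N := N)).toLinearMap

/-- Build a linear map `M →ₗ N` out of its values on the homogeneous pieces. -/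
noncomputable def fromPieces {N : Type} [AddCommGroup N] [Module R N]
    (f : ∀ i : ℤ, 𝒜 i →ₗ[R] N) : M →ₗ[R] N :=
  fromPiecesHom 𝒜 f

/-- Build a bilinear map `M →ₗ M →ₗ N` out of its values on pairs of homogeneous pieces. -/
noncomputable def fromPieces₂ {N : Type} [AddCommGroup N] [Module R N]
    (f : ∀ i j : ℤ, 𝒜 i →ₗ[R] 𝒜 j →ₗ[R] N) : M →ₗ[R] M →ₗ[R] N :=
  fromPieces 𝒜 (fun i => (fromPiecesHom 𝒜).comp (LinearMap.pi (fun j => f i j)))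

/-- The operator multiplying the degree `i` component by the Koszul sign `(-1)^(d*i)`. -/
noncomputable def signAction (d : ℤ) : M →ₗ[R] M :=
  fromPieces 𝒜 (fun i => ksign (d * i) • (𝒜 i).subtype)

/-- The Koszul twist `τ(a ⊗ b) = (-1)^{|a||b|} b ⊗ a`. -/
noncomputable def twist : M ⊗[R] M →ₗ[R] M ⊗[R] M :=
  TensorProduct.lift (fromPieces₂ 𝒜 (fun i j =>
    ksign (i * j) • ((((TensorProduct.mk R M M).flip).comp (𝒜 i).subtype).compl₂
      (𝒜 j).subtype)))

/-- Left contraction `(f ⊗ 1)(x ⊗ y) = f(x) • y` (no Koszul sign since `1` has degree `0`). -/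
noncomputable def contrL {N : Type} [AddCommGroup N] [Module R N]
    (f : N →ₗ[R] R) : N ⊗[R] M →ₗ[R] M :=
  TensorProduct.lift ((LinearMap.lsmul R M).comp f)

/-- Right contraction with Koszul sign:
`(1 ⊗ f)(x ⊗ y) = (-1)^{d|x|} f(y) • x` where `d` is the degree of `f`. -/
noncomputable def contrR {N : Type} [AddCommGroup N] [Module R N]
    (f : N →ₗ[R] R) (d : ℤ) : M ⊗[R] N →ₗ[R] M :=
  TensorProduct.lift ((((LinearMap.lsmul R M).comp f).flip).comp (signAction 𝒜 d))

/-- Koszul-signed evaluation of a pair of functionals on a tensor: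
`(x ⊗ y) ↦ f((-1)^{d₁|x|} x) * g((-1)^{d₂|y|} y)`. -/
noncomputable def ev2 (f g : M →ₗ[R] R) (d₁ d₂ : ℤ) : M ⊗[R] M →ₗ[R] R :=
  TensorProduct.lift (((LinearMap.mul R R).comp (f.comp (signAction 𝒜 d₁))).compl₂
    (g.comp (signAction 𝒜 d₂)))

/-- The map `c⃗ : A^∨ → A`, `f ↦ (-1)^{|f||c|}(f ⊗ 1)c`, implemented by putting the sign
`(-1)^{dc |x|}` on the first tensor factor of the copairing `c` (of degree `dc`). -/
noncomputable def cvec (c : M ⊗[R] M) (dc : ℤ) : (M →ₗ[R] R) →ₗ[R] M :=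
  (LinearMap.applyₗ ((LinearMap.rTensor M (signAction 𝒜 dc)) c)).comp
    ((TensorProduct.lift.equiv (RingHom.id R) M M M).toLinearMap.comp
      (LinearMap.llcomp R M R (M →ₗ[R] M) (LinearMap.lsmul R M)))

/-- The operation `(1 ⊗ c ⊗ 1) : A ⊗ A → (A ⊗ A) ⊗ (A ⊗ A)`,
`a ⊗ b ↦ (-1)^{|c||a|} (a ⊗ c₁) ⊗ (c₂ ⊗ b)` for a copairing `c` of degree `dc`. -/
noncomputable def midIns (c : M ⊗[R] M) (dc : ℤ) :
    M ⊗[R] M →ₗ[R] (M ⊗[R] M) ⊗[R] (M ⊗[R] M) :=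
  (TensorProduct.assoc R (M ⊗[R] M) M M).toLinearMap.comp
    (LinearMap.rTensor M
      (((TensorProduct.assoc R M M M).symm.toLinearMap).comp
        (((TensorProduct.mk R M (M ⊗[R] M)).flip c).comp (signAction 𝒜 dc))))

/-- The Koszul-signed cyclic permutation `σ(a⊗b⊗c) = (-1)^{(|a|+|b|)|c|} c⊗a⊗b`. -/
noncomputable def cyc : (M ⊗[R] M) ⊗[R] M →ₗ[R] (M ⊗[R] M) ⊗[R] M :=
  (LinearMap.rTensor M (twist 𝒜)).comp
    ((TensorProduct.assoc R M M M).symm.toLinearMap.comp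
      ((LinearMap.lTensor M (twist 𝒜)).comp (TensorProduct.assoc R M M M).toLinearMap))

/-- The submodule `A_i ⊗ A_j ⊆ A ⊗ A`. -/
noncomputable def tpiece (i j : ℤ) : Submodule R (M ⊗[R] M) :=
  LinearMap.range (TensorProduct.map (𝒜 i).subtype (𝒜 j).subtype)

/-- The degree `k` part `⨁_{i+j=k} A_i ⊗ A_j` of `A ⊗ A`. -/
noncomputable def tgrade (k : ℤ) : Submodule R (M ⊗[R] M) :=
  ⨆ i : ℤ, tpiece 𝒜 i (k - i)

/-- A product is homogeneous of degree `d`. -/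
def IsHomogProd (d : ℤ) (mu : M ⊗[R] M →ₗ[R] M) : Prop :=
  ∀ i j : ℤ, ∀ x ∈ 𝒜 i, ∀ y ∈ 𝒜 j, mu (x ⊗ₜ[R] y) ∈ 𝒜 (i + j + d)

/-- A coproduct is homogeneous of degree `d`. -/
def IsHomogCoprod (d : ℤ) (lam : M →ₗ[R] M ⊗[R] M) : Prop :=
  ∀ k : ℤ, ∀ x ∈ 𝒜 k, lam x ∈ tgrade 𝒜 (k + d)

/-- A scalar-valued functional is homogeneous of degree `d`. -/
def IsHomogFun (d : ℤ) (f : M →ₗ[R] R) : Prop :=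
  ∀ i : ℤ, i ≠ -d → ∀ x ∈ 𝒜 i, f x = 0

/-- A pairing is homogeneous of degree `d`. -/
def IsHomogPairing (d : ℤ) (p : M ⊗[R] M →ₗ[R] R) : Prop :=
  ∀ i j : ℤ, i + j ≠ -d → ∀ x ∈ 𝒜 i, ∀ y ∈ 𝒜 j, p (x ⊗ₜ[R] y) = 0

end GradedCoFrob
namespace GradedCoFrob

/-- A unital coFrobenius bialgebra structure on a ℤ-graded module
(Definition `defi:coFrobenius-unital-bialgebra`), with all Koszul sign conventions explicit. -/
structure UnitalCoFrob (R : Type) [CommRing R] {M : Type} [AddCommGroup M] [Module R M]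
    (𝒜 : ℤ → Submodule R M) [DirectSum.Decomposition 𝒜] where
  mu : M ⊗[R] M →ₗ[R] M
  lam : M →ₗ[R] M ⊗[R] M
  unit : M
  dm : ℤ
  dl : ℤ
  mu_homog : IsHomogProd 𝒜 dm mu
  lam_homog : IsHomogCoprod 𝒜 dl lam
  unit_homog : unit ∈ 𝒜 (-dm)
  /-- graded associativity `μ(μ⊗1) = (-1)^{|μ|} μ(1⊗μ)` -/
  mu_assoc : mu.comp (LinearMap.rTensor M mu) =
    ksign dm • (mu.comp ((TensorProduct.map (signAction 𝒜 dm) mu).comp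
      (TensorProduct.assoc R M M M).toLinearMap))
  /-- `(-1)^{|μ|} μ(η ⊗ 1) = 1` -/
  unit_left : ksign dm • (mu.comp ((TensorProduct.mk R M M) unit)) = LinearMap.id
  /-- `μ(1 ⊗ η) = 1` -/
  unit_right : mu.comp (((TensorProduct.mk R M M).flip unit).comp (signAction 𝒜 (-dm))) =
    LinearMap.id
  cop : M ⊗[R] M
  /-- the copairing `c = (-1)^{|λ||μ|+|μ|} λη` -/
  cop_def : cop = ksign (dl * dm + dm) • lam unit
  /-- `λ = (1⊗μ)(c⊗1)` -/
  cofrob_left : lam = (TensorProduct.map (signAction 𝒜 dm) mu).comp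
    ((TensorProduct.assoc R M M M).toLinearMap.comp (TensorProduct.mk R (M ⊗[R] M) M cop))
  /-- `λ = (-1)^{|μ|}(μ⊗1)(1⊗c)` -/
  cofrob_right : lam = ksign dm • ((LinearMap.rTensor M mu).comp
    ((TensorProduct.assoc R M M M).symm.toLinearMap.comp
      (((TensorProduct.mk R M (M ⊗[R] M)).flip cop).comp (signAction 𝒜 (dl - dm)))))
  /-- `τc = (-1)^{|λ|} c` -/
  cop_symm : twist 𝒜 cop = ksign dl • cop

/-- A biunital coFrobenius bialgebra structure on a ℤ-graded module
(Definition `defi:biunital-coFrobenius-bialgebra`), with all Koszul sign conventions explicit. -/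
structure BiunitalCoFrob (R : Type) [CommRing R] {M : Type} [AddCommGroup M] [Module R M]
    (𝒜 : ℤ → Submodule R M) [DirectSum.Decomposition 𝒜] where
  mu : M ⊗[R] M →ₗ[R] M
  lam : M →ₗ[R] M ⊗[R] M
  unit : M
  counit : M →ₗ[R] R
  dm : ℤ
  dl : ℤ
  mu_homog : IsHomogProd 𝒜 dm mu
  lam_homog : IsHomogCoprod 𝒜 dl lam
  unit_homog : unit ∈ 𝒜 (-dm)
  counit_homog : IsHomogFun 𝒜 (-dl) counit
  mu_assoc : mu.comp (LinearMap.rTensor M mu) =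
    ksign dm • (mu.comp ((TensorProduct.map (signAction 𝒜 dm) mu).comp
      (TensorProduct.assoc R M M M).toLinearMap))
  /-- graded coassociativity `(λ⊗1)λ = (-1)^{|λ|}(1⊗λ)λ` -/
  lam_coassoc : (LinearMap.rTensor M lam).comp lam =
    ksign dl • ((TensorProduct.assoc R M M M).symm.toLinearMap.comp
      ((TensorProduct.map (signAction 𝒜 dl) lam).comp lam))
  unit_left : ksign dm • (mu.comp ((TensorProduct.mk R M M) unit)) = LinearMap.id
  unit_right : mu.comp (((TensorProduct.mk R M M).flip unit).comp (signAction 𝒜 (-dm))) =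
    LinearMap.id
  /-- `(ε⊗1)λ = 1` -/
  counit_left : (contrL counit).comp lam = LinearMap.id
  /-- `(-1)^{|λ|}(1⊗ε)λ = 1` -/
  counit_right : ksign dl • ((contrR 𝒜 counit (-dl)).comp lam) = LinearMap.id
  cop : M ⊗[R] M
  cop_def : cop = ksign (dl * dm + dm) • lam unit
  pr : M ⊗[R] M →ₗ[R] R
  /-- the pairing `p = (-1)^{|λ|} εμ` -/
  pr_def : pr = ksign dl • (counit.comp mu)
  cofrob_left : lam = (TensorProduct.map (signAction 𝒜 dm) mu).comp
    ((TensorProduct.assoc R M M M).toLinearMap.comp (TensorProduct.mk R (M ⊗[R] M) M cop))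
  cofrob_right : lam = ksign dm • ((LinearMap.rTensor M mu).comp
    ((TensorProduct.assoc R M M M).symm.toLinearMap.comp
      (((TensorProduct.mk R M (M ⊗[R] M)).flip cop).comp (signAction 𝒜 (dl - dm)))))
  /-- `μ = (-1)^{|μ||λ|+|λ|}(p⊗1)(1⊗λ)` -/
  cofrob_pr_left : mu = ksign (dm * dl + dl) • ((contrL pr).comp
    ((TensorProduct.assoc R M M M).symm.toLinearMap.comp
      (TensorProduct.map (signAction 𝒜 dl) lam)))
  /-- `μ = (-1)^{|μ||λ|}(1⊗p)(λ⊗1)` -/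
  cofrob_pr_right : mu = ksign (dm * dl) • ((contrR 𝒜 pr (dm - dl)).comp
    ((TensorProduct.assoc R M M M).toLinearMap.comp (LinearMap.rTensor M lam)))
  cop_symm : twist 𝒜 cop = ksign dl • cop
  /-- `pτ = (-1)^{|μ|} p` -/
  pr_symm : pr.comp (twist 𝒜) = ksign dm • pr

end GradedCoFrob

/-!
Substituting the coFrobenius relations `λ = (1⊗μ)(c⊗1)` and `λ = ±(μ⊗1)(1⊗c)` into the counit
axioms `(1⊗ε)λ = ±1` and `(ε⊗1)λ = 1` turns `εμ` into `±p` and yields the two snake relations.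
Read elementwise, they say that `x ↦ p(x ⊗ -)` and `c⃗` are mutually inverse, once the Koszul sign
built into `c⃗` is moved across `p`, which is possible because `p` is homogeneous.
-/

namespace GradedCoFrob

lemma ksign_eq_negOnePow (n : ℤ) : ksign n = n.negOnePow := rfl

lemma ksign_add (a b : ℤ) : ksign (a + b) = ksign a * ksign b := by
  simp [ksign_eq_negOnePow, Int.negOnePow_add]

lemma ksign_mul_ksign_self (a : ℤ) : ksign a * ksign a = 1 := by
  rw [ksign_eq_negOnePow, ← Units.val_mul, Int.units_mul_self, Units.val_one]

lemma ksign_neg (a : ℤ) : ksign (-a) = ksign a := by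
  simp [ksign_eq_negOnePow, Int.negOnePow_neg]

lemma ksign_sub (a b : ℤ) : ksign (a - b) = ksign (a + b) := by
  rw [sub_eq_add_neg, ksign_add, ksign_add, ksign_neg]

lemma ksign_mul_self (a : ℤ) : ksign (a * a) = ksign a := by
  simp [ksign_eq_negOnePow, Int.negOnePow_mul_self]

section Graded

variable {R : Type} [CommRing R] {M : Type} [AddCommGroup M] [Module R M]
variable (𝒜 : ℤ → Submodule R M) [DirectSum.Decomposition 𝒜]

lemma linearMap_ext_of_homogeneous {N : Type} [AddCommGroup N] [Module R N] {f g : M →ₗ[R] N}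
    (h : ∀ (i : ℤ), ∀ x ∈ 𝒜 i, f x = g x) : f = g :=
  DirectSum.decompose_lhom_ext 𝒜 fun i => LinearMap.ext fun x => h i x x.2

lemma signAction_of_mem {i d : ℤ} {x : M} (hx : x ∈ 𝒜 i) :
    signAction 𝒜 d x = ksign (d * i) • x := by
  simp only [signAction, fromPieces, fromPiecesHom, LinearMap.comp_apply,
    LinearEquiv.coe_coe, LinearMap.lcomp_apply, DirectSum.decomposeLinearEquiv_apply,
    DirectSum.decompose_of_mem _ hx]
  erw [DFinsupp.lsum_single]
  simp

lemma signAction_signAction (a b : ℤ) (x : M) :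
    signAction 𝒜 a (signAction 𝒜 b x) = signAction 𝒜 (a + b) x := by
  suffices (signAction 𝒜 a).comp (signAction 𝒜 b) = signAction 𝒜 (a + b) from
    LinearMap.congr_fun this x
  refine linearMap_ext_of_homogeneous 𝒜 fun i x hx => ?_
  simp only [LinearMap.comp_apply, signAction_of_mem 𝒜 hx, map_zsmul, smul_smul, ← ksign_add,
    add_mul, add_comm]

lemma signAction_neg (a : ℤ) : signAction 𝒜 (-a) = signAction 𝒜 a :=
  linearMap_ext_of_homogeneous 𝒜 fun i x hx => by
    rw [signAction_of_mem 𝒜 hx, signAction_of_mem 𝒜 hx, neg_mul, ksign_neg]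

section Contraction

variable {N : Type} [AddCommGroup N] [Module R N]

@[simp]
lemma contrL_tmul (f : N →ₗ[R] R) (n : N) (y : M) : contrL f (n ⊗ₜ[R] y) = f n • y := by
  simp [contrL]

@[simp]
lemma contrR_tmul (f : N →ₗ[R] R) (d : ℤ) (x : M) (n : N) :
    contrR 𝒜 f d (x ⊗ₜ[R] n) = f n • signAction 𝒜 d x := by
  simp [contrR]

lemma contrL_zsmul (k : ℤ) (f : N →ₗ[R] R) : contrL (M := M) (k • f) = k • contrL f :=
  TensorProduct.ext' fun n y => by simp [mul_smul, Int.cast_smul_eq_zsmul]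

lemma contrR_zsmul (k : ℤ) (f : N →ₗ[R] R) (d : ℤ) : contrR 𝒜 (k • f) d = k • contrR 𝒜 f d :=
  TensorProduct.ext' fun n y => by simp [mul_smul, Int.cast_smul_eq_zsmul]

lemma contrL_comp_rTensor (f : N →ₗ[R] R) (g : M ⊗[R] M →ₗ[R] N) :
    (contrL f).comp (LinearMap.rTensor M g) = contrL (f.comp g) :=
  TensorProduct.ext' fun n y => by simp

lemma contrR_comp_map_signAction (f : N →ₗ[R] R) (d e : ℤ) (g : M ⊗[R] M →ₗ[R] N) :
    (contrR 𝒜 f d).comp (TensorProduct.map (signAction 𝒜 e) g) = contrR 𝒜 (f.comp g) (d + e) :=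
  TensorProduct.ext' fun x n => by simp [signAction_signAction]

end Contraction

lemma IsHomogPairing.apply_signAction_tmul {p : M ⊗[R] M →ₗ[R] R} {d : ℤ}
    (hp : IsHomogPairing 𝒜 (-d) p) (x y : M) :
    p (signAction 𝒜 d x ⊗ₜ[R] y) = ksign d • p (x ⊗ₜ[R] signAction 𝒜 d y) := by
  suffices (TensorProduct.curry p).comp (signAction 𝒜 d) =
      ksign d • ((TensorProduct.curry p).flip.comp (signAction 𝒜 d)).flip from
    by simpa using LinearMap.congr_fun₂ this x y
  refine linearMap_ext_of_homogeneous 𝒜 fun i x hx => ?_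
  refine linearMap_ext_of_homogeneous 𝒜 fun j y hy => ?_
  simp only [LinearMap.comp_apply, LinearMap.flip_apply, LinearMap.smul_apply,
    TensorProduct.curry_apply, signAction_of_mem 𝒜 hx, signAction_of_mem 𝒜 hy, map_zsmul,
    smul_smul]
  by_cases hij : i + j = d
  · -- `d i + d j = d d` and `(-1)^{d d} = (-1)^d`
    rw [← ksign_mul_self d, ← hij, mul_add, ksign_add, mul_assoc, ksign_mul_ksign_self, mul_one]
  · rw [hp i j (by rwa [neg_neg]) x hx y hy, smul_zero, smul_zero]

lemma cvec_tmul (u v : M) (d : ℤ) (f : M →ₗ[R] R) :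
    cvec 𝒜 (u ⊗ₜ[R] v) d f = f (signAction 𝒜 d u) • v := by
  simp [cvec, TensorProduct.lift.equiv_apply]

lemma cvec_add (c c' : M ⊗[R] M) (d : ℤ) (f : M →ₗ[R] R) :
    cvec 𝒜 (c + c') d f = cvec 𝒜 c d f + cvec 𝒜 c' d f := by
  simp [cvec]

lemma apply_cvec_tmul (p : M ⊗[R] M →ₗ[R] R) (c : M ⊗[R] M) (d : ℤ) (f : M →ₗ[R] R)
    (y : M) :
    p (cvec 𝒜 c d f ⊗ₜ[R] y) = f (contrR 𝒜 p (-d) (TensorProduct.assoc R M M M (c ⊗ₜ[R] y))) := by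
  induction c using TensorProduct.induction_on with
  | zero => simp [cvec]
  | tmul u v => simp [cvec_tmul, signAction_neg, ← TensorProduct.smul_tmul', mul_comm]
  | add c₁ c₂ h₁ h₂ => simp [cvec_add, TensorProduct.add_tmul, h₁, h₂]

lemma cvec_curry {p : M ⊗[R] M →ₗ[R] R} {d : ℤ} (hp : IsHomogPairing 𝒜 (-d) p)
    (c : M ⊗[R] M) (x : M) :
    cvec 𝒜 c d (TensorProduct.curry p x) =
      ksign d • contrL p ((TensorProduct.assoc R M M M).symm (signAction 𝒜 d x ⊗ₜ[R] c)) := by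
  induction c using TensorProduct.induction_on with
  | zero => simp [cvec]
  | tmul u v =>
    simp [cvec_tmul, hp.apply_signAction_tmul, -zsmul_eq_mul, smul_smul, ksign_mul_ksign_self]
  | add c₁ c₂ h₁ h₂ => simp [cvec_add, TensorProduct.tmul_add, h₁, h₂]

lemma curry_comp_cvec {p : M ⊗[R] M →ₗ[R] R} {c : M ⊗[R] M} {d : ℤ}
    (hsnake : (contrR 𝒜 p (-d)).comp ((TensorProduct.assoc R M M M).toLinearMap.comp
      (TensorProduct.mk R (M ⊗[R] M) M c)) = LinearMap.id) :
    (TensorProduct.curry p).comp (cvec 𝒜 c d) = LinearMap.id :=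
  LinearMap.ext fun f => LinearMap.ext fun y => by
    simpa [apply_cvec_tmul] using congrArg f (LinearMap.congr_fun hsnake y)

lemma cvec_comp_curry {p : M ⊗[R] M →ₗ[R] R} {c : M ⊗[R] M} {d : ℤ}
    (hp : IsHomogPairing 𝒜 (-d) p)
    (hsnake : ksign d • ((contrL p).comp ((TensorProduct.assoc R M M M).symm.toLinearMap.comp
      (((TensorProduct.mk R M (M ⊗[R] M)).flip c).comp (signAction 𝒜 d)))) = LinearMap.id) :
    (cvec 𝒜 c d).comp (TensorProduct.curry p) = LinearMap.id :=
  LinearMap.ext fun x => by simpa [cvec_curry 𝒜 hp] using LinearMap.congr_fun hsnake x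

end Graded

namespace BiunitalCoFrob

variable {R : Type} [CommRing R] {M : Type} [AddCommGroup M] [Module R M]
variable {𝒜 : ℤ → Submodule R M} [DirectSum.Decomposition 𝒜] (B : BiunitalCoFrob R 𝒜)

lemma counit_comp_mu : B.counit.comp B.mu = ksign B.dl • B.pr := by
  rw [B.pr_def, smul_smul, ksign_mul_ksign_self, one_smul]

lemma isHomogPairing_pr : IsHomogPairing 𝒜 (B.dm - B.dl) B.pr := by
  intro i j hij x hx y hy
  rw [B.pr_def, LinearMap.smul_apply, LinearMap.comp_apply,
    B.counit_homog _ (by omega) _ (B.mu_homog i j x hx y hy), smul_zero]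

lemma snake_right : (contrR 𝒜 B.pr (B.dm - B.dl)).comp
    ((TensorProduct.assoc R M M M).toLinearMap.comp
      (TensorProduct.mk R (M ⊗[R] M) M B.cop)) = LinearMap.id := by
  have h := contrR_comp_map_signAction 𝒜 B.counit (-B.dl) B.dm B.mu
  rw [neg_add_eq_sub] at h
  rw [← B.counit_right, B.cofrob_left, B.pr_def, contrR_zsmul, ← h]
  rfl

lemma snake_left : ksign (B.dl + B.dm) • ((contrL B.pr).comp
    ((TensorProduct.assoc R M M M).symm.toLinearMap.comp
      (((TensorProduct.mk R M (M ⊗[R] M)).flip B.cop).comp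
        (signAction 𝒜 (B.dl - B.dm))))) = LinearMap.id := by
  rw [← B.counit_left, B.cofrob_right, LinearMap.comp_smul,
    ← LinearMap.comp_assoc _ (LinearMap.rTensor M B.mu), contrL_comp_rTensor, counit_comp_mu,
    contrL_zsmul, LinearMap.smul_comp, smul_smul, ← ksign_add, add_comm]

end BiunitalCoFrob

theorem biunital_coFrobenius_snake_general {R : Type} [CommRing R] {M : Type} [AddCommGroup M]
    [Module R M]
    (𝒜 : ℤ → Submodule R M) [DirectSum.Decomposition 𝒜]
    (B : BiunitalCoFrob R 𝒜) :
    -- (1⊗p)(c⊗1) = (-1)^{|λ|+|μ|}(p⊗1)(1⊗c)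
    ((contrR 𝒜 B.pr (B.dm - B.dl)).comp
        ((TensorProduct.assoc R M M M).toLinearMap.comp
          (TensorProduct.mk R (M ⊗[R] M) M B.cop))
      = ksign (B.dl + B.dm) • ((contrL B.pr).comp
        ((TensorProduct.assoc R M M M).symm.toLinearMap.comp
          (((TensorProduct.mk R M (M ⊗[R] M)).flip B.cop).comp
            (signAction 𝒜 (B.dl - B.dm)))))) ∧
    -- (1⊗p)(c⊗1) = 1
    ((contrR 𝒜 B.pr (B.dm - B.dl)).comp
        ((TensorProduct.assoc R M M M).toLinearMap.comp
          (TensorProduct.mk R (M ⊗[R] M) M B.cop)) = LinearMap.id) ∧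
    -- perfectness
    (Function.Bijective (TensorProduct.curry B.pr) ∧
      Function.Bijective (cvec 𝒜 B.cop (B.dl - B.dm))) := by
  have hp : IsHomogPairing 𝒜 (-(B.dl - B.dm)) B.pr := by
    rw [neg_sub]; exact B.isHomogPairing_pr
  have hpc := curry_comp_cvec 𝒜 (c := B.cop) (d := B.dl - B.dm) (by
    rw [neg_sub]; exact B.snake_right)
  have hcp := cvec_comp_curry 𝒜 hp (by rw [ksign_sub]; exact B.snake_left)
  let e : M ≃ₗ[R] (M →ₗ[R] R) := .ofLinearMap _ _ hpc hcp
  exact ⟨B.snake_right.trans B.snake_left.symm, B.snake_right, e.bijective, e.symm.bijective⟩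

/-- In a biunital coFrobenius bialgebra `(A,μ,λ,η,ε)` the pairing
`p = (-1)^{|λ|}εμ` and copairing `c = (-1)^{|λ||μ|+|μ|}λη` satisfy the snake relations
`(1⊗p)(c⊗1) = (-1)^{|λ|+|μ|}(p⊗1)(1⊗c) = 1`; consequently `p` and `c` are perfect. -/
theorem biunital_coFrobenius_snake {R : Type} [CommRing R] {M : Type} [AddCommGroup M]
    [Module R M] [Module.Free R M] [Module.Finite R M]
    (𝒜 : ℤ → Submodule R M) [DirectSum.Decomposition 𝒜]
    (B : BiunitalCoFrob R 𝒜) :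
    -- (1⊗p)(c⊗1) = (-1)^{|λ|+|μ|}(p⊗1)(1⊗c)
    ((contrR 𝒜 B.pr (B.dm - B.dl)).comp
        ((TensorProduct.assoc R M M M).toLinearMap.comp
          (TensorProduct.mk R (M ⊗[R] M) M B.cop))
      = ksign (B.dl + B.dm) • ((contrL B.pr).comp
        ((TensorProduct.assoc R M M M).symm.toLinearMap.comp
          (((TensorProduct.mk R M (M ⊗[R] M)).flip B.cop).comp
            (signAction 𝒜 (B.dl - B.dm)))))) ∧
    -- (1⊗p)(c⊗1) = 1
    ((contrR 𝒜 B.pr (B.dm - B.dl)).comp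
        ((TensorProduct.assoc R M M M).toLinearMap.comp
          (TensorProduct.mk R (M ⊗[R] M) M B.cop)) = LinearMap.id) ∧
    -- perfectness
    (Function.Bijective (TensorProduct.curry B.pr) ∧
      Function.Bijective (cvec 𝒜 B.cop (B.dl - B.dm))) :=
  biunital_coFrobenius_snake_general 𝒜 B

end GradedCoFrob
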